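/- arXiv:1907.11573 — 3 statements merged into one kernel-verified Lean document; each statement's English description precedes it below -/
import Mathlib

section
/- Let (w_k)_{k∈ℕ} be a sequence of elements of a language L that is strictly increasing with respect to <_ℓ, and let w be an ω-word such that w_k <_ℓ w for every k and such that every ω-word w' with w_k <_ℓ w' for all k satisfies w ≤_ℓ w' (that is, w is the least upper bound of the chain among ω-words). Then w is a limit of L. -/
variable {α : Type*} [Fintype α] [LinearOrder α] [Nonempty α]

/-- `w↾n`, the length-`n` prefix of the ω-word `w`. -/
def restrict (w : ℕ → α) (n : ℕ) : List α := List.ofFn (fun i : Fin n => w i)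

/-- `w` is a limit of `L`: every finite prefix of `w` is a proper prefix of some word of `L`. -/
def blim (L : Set (List α)) : Set (ℕ → α) :=
  {w | ∀ n : ℕ, ∃ u ∈ L, restrict w n <+: u ∧ restrict w n ≠ u}

/-- `u <_ℓ w` for a word `u` and an ω-word `w`. -/
def wordLtOmega (u : List α) (w : ℕ → α) : Prop :=
  u = restrict w u.length ∨
    ∃ (i : ℕ) (h : i < u.length), u.take i = restrict w i ∧ u.get ⟨i, h⟩ < w i

/-- `w <_ℓ u` for an ω-word `w` and a word `u`. -/
def omegaLtWord (w : ℕ → α) (u : List α) : Prop :=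
  ∃ (i : ℕ) (h : i < u.length), u.take i = restrict w i ∧ w i < u.get ⟨i, h⟩

/-- `w <_ℓ w'` for ω-words. -/
def omegaLt (w w' : ℕ → α) : Prop :=
  ∃ n : ℕ, (∀ i < n, w i = w' i) ∧ w n < w' n

/-- `w ≤_ℓ w'` for ω-words. -/
def omegaLe (w w' : ℕ → α) : Prop := w = w' ∨ omegaLt w w'

/-- Concatenation `u·w` of a finite word and an ω-word. -/
def ocat (u : List α) (w : ℕ → α) : ℕ → α :=
  fun i => if h : i < u.length then u.get ⟨i, h⟩ else w (i - u.length)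

/-- The strict order `u <_s v` on words. -/
def strictLt (u v : List α) : Prop :=
  ∃ (x y z : List α) (a b : α), a < b ∧ u = x ++ a :: y ∧ v = x ++ b :: z

/-- `v^ω` for a nonempty word `v`. -/
def wpow (v : List α) (hv : v ≠ []) : ℕ → α :=
  fun i => v.get ⟨i % v.length, Nat.mod_lt _ (List.length_pos_iff.mpr hv)⟩

/-- `u^n`, the `n`-fold concatenation of the word `u` with itself. -/
def npow (u : List α) (n : ℕ) : List α := (List.replicate n u).flatten

set_option linter.unusedSectionVars false

lemma restrict_length (w : ℕ → α) (n : ℕ) : (restrict w n).length = n := by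
  simp [restrict]

lemma restrict_getElem (w : ℕ → α) {n i : ℕ} (h : i < (restrict w n).length) :
    (restrict w n)[i] = w i := by
  simp [restrict]

lemma restrict_take (w : ℕ → α) {m n : ℕ} (h : m ≤ n) :
    (restrict w n).take m = restrict w m := by
  apply List.ext_getElem
  · simp [restrict, h]
  · intro i h1 h2
    simp [restrict]

lemma take_eq_restrict_iff {u : List α} {w : ℕ → α} {n : ℕ} (hn : n ≤ u.length) :
    u.take n = restrict w n ↔ ∀ i (h : i < n), u[i]'(h.trans_le hn) = w i := by
  constructor
  · intro h i hi
    have h2 : i < (u.take n).length := by simp [hi, Nat.lt_of_lt_of_le hi hn]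
    have := List.getElem_of_eq h h2
    simpa [List.getElem_take, restrict_getElem] using this
  · intro h
    apply List.ext_getElem
    · simp [restrict_length, hn]
    · intro i h1 h2
      have hi : i < n := by simpa [hn] using h1
      simp [List.getElem_take, restrict_getElem, h i hi]

lemma wordLtOmega_iff {u : List α} {w : ℕ → α} :
    wordLtOmega u w ↔ u = restrict w u.length ∨
      ∃ (i : ℕ) (h : i < u.length), u.take i = restrict w i ∧ u[i] < w i := by
  simp [wordLtOmega]

lemma lex_cases {u v : List α} (h : List.Lex (· < ·) u v) :
    (u <+: v ∧ u ≠ v) ∨ ∃ (i : ℕ) (h1 : i < u.length) (h2 : i < v.length),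
      u.take i = v.take i ∧ u[i] < v[i] := by
  induction h with
  | nil => exact Or.inl ⟨List.nil_prefix, by simp⟩
  | @cons a l1 l2 h ih =>
    rcases ih with ⟨hp, hne⟩ | ⟨i, h1, h2, ht, hl⟩
    · exact Or.inl ⟨List.cons_prefix_cons.mpr ⟨rfl, hp⟩, by simp [hne]⟩
    · refine Or.inr ⟨i + 1, by simpa using h1, by simpa using h2, ?_, by simpa using hl⟩
      simp [List.take_succ_cons, ht]
  | @rel a l1 b l2 hab =>
    exact Or.inr ⟨0, by simp, by simp, by simp, by simpa using hab⟩

lemma prefix_restrict {u : List α} {w : ℕ → α} {n : ℕ} (h : u <+: restrict w n) :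
    u = restrict w u.length := by
  have hl : u.length ≤ n := by simpa [restrict_length] using h.length_le
  conv_lhs => rw [List.prefix_iff_eq_take.mp h, restrict_take w hl]

lemma lex_trans_omega {u v : List α} {w : ℕ → α} (huv : List.Lex (· < ·) u v)
    (hvw : wordLtOmega v w) : wordLtOmega u w := by
  rw [wordLtOmega_iff] at hvw ⊢
  rcases lex_cases huv with ⟨hp, hne⟩ | ⟨i, h1, h2, ht, hl⟩
  · rcases hvw with hpre | ⟨j, hjv, htv, hlv⟩
    · exact Or.inl (prefix_restrict (hpre ▸ hp))
    · rcases lt_or_ge j u.length with hj | hj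
      · refine Or.inr ⟨j, hj, ?_, ?_⟩
        · rw [List.prefix_iff_eq_take.mp hp, List.take_take, min_eq_left hj.le, htv]
        · rw [hp.getElem hj]; exact hlv
      · left
        apply prefix_restrict (n := j)
        rw [← htv]
        calc u = v.take u.length := List.prefix_iff_eq_take.mp hp
        _ = (v.take j).take u.length := by rw [List.take_take, min_eq_left hj]
        _ <+: v.take j := List.take_prefix _ _
  · rcases hvw with hpre | ⟨j, hjv, htv, hlv⟩
    · refine Or.inr ⟨i, h1, ?_, ?_⟩
      · rw [ht, hpre, restrict_take w (by simpa [restrict_length] using h2.le)]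
      · have : v[i] = w i := by
          rw [List.getElem_of_eq hpre h2, restrict_getElem]
        rw [← this]; exact hl
    · rcases lt_trichotomy i j with hij | rfl | hij
      · refine Or.inr ⟨i, h1, ?_, ?_⟩
        · rw [ht, ← restrict_take w hij.le, ← htv, List.take_take, min_eq_left hij.le]
        · have : v[i] = w i := by
            have := List.getElem_of_eq htv (by simp only [List.length_take]; exact lt_min hij (hij.trans hjv) : i < (v.take j).length)
            simpa [List.getElem_take, restrict_getElem] using this
          rw [← this]; exact hl
      · exact Or.inr ⟨i, h1, ht.trans htv, hl.trans hlv⟩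
      · have hju : j < u.length := hij.trans h1
        refine Or.inr ⟨j, hju, ?_, ?_⟩
        · rw [← min_eq_left hij.le, ← List.take_take, ht, List.take_take, min_eq_left hij.le, htv]
        · have e : u[j] = v[j] := by
            have := List.getElem_of_eq ht (by simp [hij, hju] : j < (u.take i).length)
            simpa [List.getElem_take] using this
          rw [e]; exact hlv

open Classical in
lemma wordLtOmega_of_take_top {u : List α} {w' : ℕ → α} {m : ℕ} (top : α)
    (htop : ∀ x : α, x ≤ top) (hm : m ≤ u.length) (ht : u.take m = restrict w' m)
    (hw : ∀ j, m ≤ j → w' j = top) : wordLtOmega u w' := by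
  rw [wordLtOmega_iff]
  by_cases hall : ∀ j (hj : j < u.length), m ≤ j → u[j] = top
  · left
    apply List.ext_getElem (by simp [restrict_length])
    intro j hj hj'
    rw [restrict_getElem]
    rcases lt_or_ge j m with hjm | hjm
    · have := List.getElem_of_eq ht (by simp [hjm, Nat.lt_of_lt_of_le hjm hm] :
        j < (u.take m).length)
      simpa [List.getElem_take, restrict_getElem] using this
    · rw [hall j hj hjm, hw j hjm]
  · push_neg at hall
    have hex : ∃ j, ∃ hj : j < u.length, m ≤ j ∧ u[j] ≠ top := by
      obtain ⟨j, hj, h1, h2⟩ := hall; exact ⟨j, hj, h1, h2⟩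
    let j0 := Nat.find hex
    obtain ⟨hj0, hmj0, hne0⟩ := Nat.find_spec hex
    right
    refine ⟨j0, hj0, ?_, ?_⟩
    · rw [take_eq_restrict_iff hj0.le]
      intro p hp
      rcases lt_or_ge p m with hpm | hpm
      · have := List.getElem_of_eq ht (by simp [hpm, Nat.lt_of_lt_of_le hpm hm] :
          p < (u.take m).length)
        simpa [List.getElem_take, restrict_getElem] using this
      · have : ¬ ∃ hp' : p < u.length, m ≤ p ∧ u[p] ≠ top := Nat.find_min hex hp
        push_neg at this
        rw [this (hp.trans hj0) hpm, hw p hpm]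
    · rw [hw j0 hmj0]
      exact lt_of_le_of_ne (htop _) hne0

/-- the least upper bound (among ω-words) of a strictly `<_ℓ`-increasing
sequence in `L` is a limit of `L`. -/
theorem stmt3 (L : Set (List α)) (ws : ℕ → List α) (hmem : ∀ k, ws k ∈ L)
    (hinc : ∀ j k : ℕ, j < k → List.Lex (· < ·) (ws j) (ws k))
    (w : ℕ → α) (hub : ∀ k, wordLtOmega (ws k) w)
    (hlub : ∀ w' : ℕ → α, (∀ k, wordLtOmega (ws k) w') → omegaLe w w') :
    w ∈ blim L := by
  intro n
  by_contra hno
  push_neg at hno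
  -- if restrict w n is a prefix of ws k and shorter, contradiction
  have habs : ∀ k, (ws k).take n = restrict w n → n < (ws k).length → False := by
    intro k htk hlk
    have hpref : restrict w n <+: ws k := htk ▸ List.take_prefix n (ws k)
    have heq := hno (ws k) (hmem k) hpref
    have hlen := congrArg List.length heq
    rw [restrict_length] at hlen
    omega
  set P : ℕ → Fin n × α → Prop := fun k p =>
    ∃ h : (p.1 : ℕ) < (ws k).length, (ws k).take (p.1 : ℕ) = restrict w (p.1 : ℕ) ∧
      (ws k)[(p.1 : ℕ)]'h = p.2 ∧ p.2 < w (p.1 : ℕ) with hP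
  have step1 : ∀ k, ws k <+: restrict w n ∨ ∃ p : Fin n × α, P k p := by
    intro k
    rcases wordLtOmega_iff.mp (hub k) with hpre | ⟨i, hi, hti, hli⟩
    · rcases le_or_gt (ws k).length n with h | h
      · left
        rw [hpre, ← restrict_take w h]
        exact List.take_prefix _ _
      · exfalso
        apply habs k ?_ h
        conv_lhs => rw [hpre]
        rw [restrict_take w h.le]
    · rcases lt_or_ge i n with hin | hin
      · exact Or.inr ⟨(⟨i, hin⟩, (ws k)[i]), hi, hti, rfl, hli⟩
      · exfalso
        apply habs k ?_ (Nat.lt_of_le_of_lt hin hi)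
        rw [← restrict_take w hin, ← hti, List.take_take, min_eq_left hin]
  have lexirr : ∀ u : List α, ¬ List.Lex (· < ·) u u := by
    intro u h
    rcases lex_cases h with ⟨_, hne⟩ | ⟨i, h1, h2, _, hl⟩
    exacts [hne rfl, lt_irrefl _ hl]
  have hinj : Function.Injective ws := by
    intro a b hab
    rcases lt_trichotomy a b with h | h | h
    · exact absurd (hab ▸ hinc a b h) (lexirr _)
    · exact h
    · exact absurd (hab ▸ hinc b a h) (lexirr _)
  have hSinf : {k | ¬ ws k <+: restrict w n}.Infinite := by
    have hfin : {k | ws k <+: restrict w n}.Finite := by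
      have h1 : {u : List α | u <+: restrict w n}.Finite := by
        apply Set.Finite.subset (List.inits (restrict w n)).toFinset.finite_toSet
        intro u hu
        simpa [List.mem_inits] using hu
      exact Set.Finite.preimage (f := ws) hinj.injOn h1
    simpa [Set.compl_setOf] using hfin.infinite_compl
  have key : ∃ p : Fin n × α, {k | ¬ ws k <+: restrict w n ∧ P k p}.Infinite := by
    by_contra hcon
    push_neg at hcon
    apply hSinf
    apply Set.Finite.subset (Set.finite_iUnion hcon)
    intro k hk
    obtain ⟨p, hp⟩ := (step1 k).resolve_left hk
    exact Set.mem_iUnion.mpr ⟨p, ⟨hk, hp⟩⟩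
  obtain ⟨⟨i, a⟩, hT⟩ := key
  obtain ⟨k0, hk0⟩ := hT.nonempty
  have hai : a < w i := by
    obtain ⟨-, -, -, -, h⟩ := hk0
    exact h
  obtain ⟨top, htop⟩ : ∃ t : α, ∀ x : α, x ≤ t :=
    ⟨Finset.univ.max' Finset.univ_nonempty, fun x => Finset.le_max' _ x (Finset.mem_univ x)⟩
  set w' : ℕ → α := fun m => if m < (i : ℕ) then w m else if m = (i : ℕ) then a else top with hw'
  have hub' : ∀ k, wordLtOmega (ws k) w' := by
    intro k
    obtain ⟨k', hk'T, hkk'⟩ : ∃ k', (¬ ws k' <+: restrict w n ∧ P k' (i, a)) ∧ k < k' := by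
      obtain ⟨k', hk', hnot⟩ := Set.Infinite.exists_notMem_finite hT (Set.finite_Iic k)
      exact ⟨k', hk', by simpa using hnot⟩
    apply lex_trans_omega (hinc k k' hkk')
    obtain ⟨-, hlen', htake', hget', -⟩ := hk'T
    apply wordLtOmega_of_take_top top htop (m := (i : ℕ) + 1) (Nat.succ_le_of_lt hlen')
    · rw [take_eq_restrict_iff (Nat.succ_le_of_lt hlen')]
      intro p hp
      rcases lt_or_eq_of_le (Nat.lt_succ_iff.mp hp) with hpi | hpi
      · have h1 : (ws k')[p]'(hpi.trans hlen') = w p :=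
          (take_eq_restrict_iff hlen'.le).mp htake' p hpi
        rw [h1, hw']
        simp [hpi]
      · subst hpi
        rw [hget', hw']
        simp
    · intro j hj
      rw [hw']
      have h1 : ¬ j < (i : ℕ) := by omega
      have h2 : ¬ j = (i : ℕ) := by omega
      simp [h1, h2]
  rcases hlub w' hub' with heq | ⟨m, hag, hlt⟩
  · have := congrFun heq (i : ℕ)
    rw [hw'] at this
    simp at this
    exact absurd (this ▸ hai) (lt_irrefl _)
  · rcases lt_trichotomy m (i : ℕ) with h | h | h
    · rw [show w' m = w m by rw [hw']; simp [h]] at hlt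
      exact lt_irrefl _ hlt
    · rw [show w' m = a by rw [hw']; simp [h]] at hlt
      rw [h] at hlt
      exact absurd (hlt.trans hai) (lt_irrefl _)
    · have h2 := hag (i : ℕ) h
      rw [show w' (i : ℕ) = a by rw [hw']; simp] at h2
      exact absurd (h2 ▸ hai) (lt_irrefl _)
end

section
/- For every language L and all words x, y : List α, blim {x ++ u ++ y | u ∈ L} = {x·w | w ∈ blim L}. -/
variable {α : Type*} [Fintype α] [LinearOrder α] [Nonempty α]

set_option linter.unusedSectionVars false

lemma restrict_add (w : ℕ → α) (m k : ℕ) :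
    restrict w (m + k) = restrict w m ++ List.ofFn (fun i : Fin k => w (m + i)) := by
  rw [restrict, List.ofFn_add]
  rfl

lemma restrict_mono_prefix (w : ℕ → α) {m n : ℕ} (h : m ≤ n) :
    restrict w m <+: restrict w n := by
  obtain ⟨k, rfl⟩ := Nat.exists_eq_add_of_le h
  rw [restrict_add]
  exact List.prefix_append _ _

lemma restrict_ocat (x : List α) (w : ℕ → α) (n : ℕ) :
    restrict (ocat x w) (x.length + n) = x ++ restrict w n := by
  rw [restrict_add]
  congr 1
  · apply List.ext_getElem (by simp [restrict])
    intro i h1 h2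
    simp only [restrict, List.getElem_ofFn]
    simp only [restrict, List.length_ofFn] at h1
    simp [ocat, h2]
  · simp only [restrict]
    congr 1
    funext i
    simp [ocat]

/-- `blim (xLy) = x · blim L`. -/
theorem stmt8 (L : Set (List α)) (x y : List α) :
    blim {v : List α | ∃ u ∈ L, v = x ++ u ++ y} =
      {z : ℕ → α | ∃ w ∈ blim L, z = ocat x w} := by
  ext z
  constructor
  · intro hz
    set w : ℕ → α := fun i => z (x.length + i) with hw
    have hzx : restrict z x.length = x := by
      obtain ⟨v, ⟨u, _, rfl⟩, hpre, _⟩ := hz x.length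
      rw [List.prefix_iff_eq_take.mp hpre, restrict_length, List.append_assoc,
        List.take_left]
    have hzw : z = ocat x w := by
      funext i
      by_cases h : i < x.length
      · have h2 : i < (restrict z x.length).length := by
          rw [restrict_length]; exact h
        simp only [ocat, dif_pos h, List.get_eq_getElem]
        calc z i = (restrict z x.length)[i]'h2 := by simp [restrict]
          _ = x[i] := by simp_rw [hzx]
      · simp only [ocat, dif_neg h, hw]
        congr 1
        omega
    refine ⟨w, ?_, hzw⟩
    intro n
    obtain ⟨v, ⟨u, hu, rfl⟩, hpre, hne⟩ := hz (x.length + (n + y.length + 1))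
    rw [hzw, restrict_ocat, List.append_assoc] at hpre
    have hpre2 : restrict w (n + y.length + 1) <+: u ++ y :=
      (List.prefix_append_right_inj x).mp hpre
    have hlen : n + y.length + 1 ≤ u.length + y.length := by
      have := hpre2.length_le
      simpa [restrict_length] using this
    have hnu : n < u.length := by omega
    have hp3 : restrict w n <+: u ++ y :=
      (restrict_mono_prefix w (by omega)).trans hpre2
    have hp4 : restrict w n <+: u := by
      have h5 := List.prefix_iff_eq_take.mp hp3
      rw [restrict_length, List.take_append_of_le_length hnu.le] at h5
      rw [List.prefix_iff_eq_take, restrict_length]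
      exact h5
    exact ⟨u, hu, hp4, fun he => by
      have := congrArg List.length he
      rw [restrict_length] at this
      omega⟩
  · rintro ⟨w, hw, rfl⟩
    intro n
    obtain ⟨u, hu, hpre, hne⟩ := hw n
    have hnu : n < u.length := by
      rcases lt_or_ge n u.length with h | h
      · exact h
      · exact absurd (hpre.eq_of_length_le (by simpa [restrict_length] using h)) hne
    refine ⟨x ++ u ++ y, ⟨u, hu, rfl⟩, ?_, ?_⟩
    · have h1 : restrict (ocat x w) n <+: restrict (ocat x w) (x.length + n) :=
        restrict_mono_prefix _ (by omega)
      rw [restrict_ocat] at h1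
      refine h1.trans ?_
      rw [List.append_assoc]
      exact (List.prefix_append_right_inj x).mpr (hpre.trans (List.prefix_append u y))
    · intro he
      have := congrArg List.length he
      simp [restrict_length] at this
      omega
end

section
/- Let L be an infinite language and w an ω-word. Then blim L = {w} (w is the unique limit of L) if and only if for every n : ℕ the set {u ∈ L | u <_s w↾n or w↾n <_s u} is finite. -/
variable {α : Type*} [Fintype α] [LinearOrder α] [Nonempty α]

section Aux

lemma restrict_succ (w : ℕ → α) (n : ℕ) :
    restrict w (n + 1) = restrict w n ++ [w n] := by
  rw [restrict, List.ofFn_succ']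
  simp [restrict, List.concat_eq_append]

lemma restrict_prefix (w : ℕ → α) {n m : ℕ} (h : n ≤ m) :
    restrict w n <+: restrict w m := by
  induction m with
  | zero => obtain rfl : n = 0 := Nat.le_zero.mp h; exact List.prefix_refl _
  | succ m ih =>
    rcases Nat.eq_or_lt_of_le h with rfl | h'
    · exact List.prefix_refl _
    · exact (ih (Nat.lt_succ_iff.mp h')).trans
        (by rw [restrict_succ]; exact List.prefix_append _ _)

lemma strictLt_not_prefix {u v : List α} (h : strictLt u v) :
    ¬ u <+: v ∧ ¬ v <+: u := by
  obtain ⟨x, y, z, a, b, hab, rfl, rfl⟩ := h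
  constructor
  · intro h
    rw [List.prefix_append_right_inj, List.cons_prefix_cons] at h
    exact absurd h.1 hab.ne
  · intro h
    rw [List.prefix_append_right_inj, List.cons_prefix_cons] at h
    exact absurd h.1 hab.ne'

lemma prefix_or_strictLt : ∀ (u v : List α),
    u <+: v ∨ v <+: u ∨ strictLt u v ∨ strictLt v u
  | [], _ => Or.inl (List.nil_prefix)
  | (_ :: _), [] => Or.inr (Or.inl List.nil_prefix)
  | (a :: u), (b :: v) => by
    rcases lt_trichotomy a b with h | rfl | h
    · exact Or.inr (Or.inr (Or.inl ⟨[], u, v, a, b, h, rfl, rfl⟩))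
    · rcases prefix_or_strictLt u v with h | h | h | h
      · exact Or.inl (List.cons_prefix_cons.mpr ⟨rfl, h⟩)
      · exact Or.inr (Or.inl (List.cons_prefix_cons.mpr ⟨rfl, h⟩))
      · obtain ⟨x, y, z, c, d, hcd, rfl, rfl⟩ := h
        exact Or.inr (Or.inr (Or.inl ⟨a :: x, y, z, c, d, hcd, rfl, rfl⟩))
      · obtain ⟨x, y, z, c, d, hcd, rfl, rfl⟩ := h
        exact Or.inr (Or.inr (Or.inr ⟨a :: x, y, z, c, d, hcd, rfl, rfl⟩))
    · exact Or.inr (Or.inr (Or.inr ⟨[], v, u, b, a, h, rfl, rfl⟩))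

lemma konig_step (L : Set (List α)) (p : List α)
    (h : {u ∈ L | p <+: u}.Infinite) : ∃ a : α, {u ∈ L | p ++ [a] <+: u}.Infinite := by
  by_contra hc
  push_neg at hc
  have hfin : (insert p (⋃ a : α, {u ∈ L | p ++ [a] <+: u})).Finite :=
    (Set.finite_iUnion hc).insert p
  refine h (hfin.subset ?_)
  rintro u ⟨huL, hp⟩
  rcases eq_or_ne u p with rfl | hne
  · exact Set.mem_insert _ _
  · obtain ⟨t, rfl⟩ := hp
    cases t with
    | nil => simp at hne
    | cons c t =>
      refine Set.mem_insert_of_mem _ (Set.mem_iUnion.mpr ⟨c, huL, ?_⟩)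
      exact ⟨t, by simp⟩

lemma exists_mem_blim (L : Set (List α)) (hL : L.Infinite) : ∃ w : ℕ → α, w ∈ blim L := by
  classical
  set step : List α → List α := fun p =>
    if h : {u ∈ L | p <+: u}.Infinite then
      p ++ [Classical.choose (konig_step L p h)] else p with hstepdef
  set f : ℕ → List α := fun n => step^[n] [] with hfdef
  have hf0 : f 0 = [] := rfl
  have hfs : ∀ n, f (n + 1) = step (f n) := fun n => Function.iterate_succ_apply' step n []
  have hinv : ∀ n, (f n).length = n ∧ {u ∈ L | f n <+: u}.Infinite := by
    intro n
    induction n with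
    | zero =>
      refine ⟨rfl, ?_⟩
      have : {u ∈ L | f 0 <+: u} = L := by
        ext u; simp [hf0]
      rw [this]; exact hL
    | succ n ih =>
      obtain ⟨hlen, hinf⟩ := ih
      have hstep : f (n + 1) = f n ++ [Classical.choose (konig_step L (f n) hinf)] := by
        rw [hfs, hstepdef]; simp only [dif_pos hinf]
      rw [hstep]
      exact ⟨by simp [hlen], Classical.choose_spec (konig_step L (f n) hinf)⟩
  set w : ℕ → α := fun n => (f (n + 1)).getD n (Classical.arbitrary α) with hw
  have hrestrict : ∀ n, restrict w n = f n := by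
    intro n
    induction n with
    | zero => simp [restrict, hf0]
    | succ n ih =>
      obtain ⟨hlen, hinf⟩ := hinv n
      have hstep : f (n + 1) = f n ++ [Classical.choose (konig_step L (f n) hinf)] := by
        rw [hfs, hstepdef]; simp only [dif_pos hinf]
      have hwn : w n = Classical.choose (konig_step L (f n) hinf) := by
        rw [hw]
        simp only
        rw [hstep, List.getD_eq_getElem _ _ (by simp [hlen]),
          List.getElem_append_right (by omega)]
        simp [hlen]
      rw [restrict_succ, ih, hwn, hstep]
  refine ⟨w, fun n => ?_⟩
  obtain ⟨hlen, hinf⟩ := hinv n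
  obtain ⟨u, hu⟩ := (hinf.diff (Set.finite_singleton (f n))).nonempty
  refine ⟨u, hu.1.1, by rw [hrestrict n]; exact hu.1.2, ?_⟩
  rw [hrestrict n]
  intro h
  exact hu.2 h.symm

lemma blim_mono {S L : Set (List α)} (h : S ⊆ L) : blim S ⊆ blim L := by
  intro w hw n
  obtain ⟨u, hu, h1, h2⟩ := hw n
  exact ⟨u, h hu, h1, h2⟩

lemma restrict_ne_of_ne {w w' : ℕ → α} (h : w' ≠ w) :
    ∃ N, restrict w' N ≠ restrict w N := by
  have : ∃ n, w' n ≠ w n := by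
    by_contra hc
    push_neg at hc
    exact h (funext hc)
  obtain ⟨n, hn⟩ := this
  refine ⟨n + 1, fun heq => hn ?_⟩
  have h1 : (restrict w' (n + 1))[n]'(by simp [restrict_length]) = w' n := by
    simp only [restrict, List.getElem_ofFn]
  have h2 : (restrict w (n + 1))[n]'(by simp [restrict_length]) = w n := by
    simp only [restrict, List.getElem_ofFn]
  rw [← h1, ← h2]
  simp only [heq]

end Aux

/-- an infinite language has `w` as its unique limit iff every prefix of `w`
is strictly (`<_s`) comparable with only finitely many words of the language. -/
theorem stmt9 (L : Set (List α)) (hL : L.Infinite) (w : ℕ → α) :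
    blim L = {w} ↔
      ∀ n : ℕ, {u ∈ L | strictLt u (restrict w n) ∨ strictLt (restrict w n) u}.Finite := by
  constructor
  · intro hblim n
    by_contra hinf
    obtain ⟨w', hw'⟩ := exists_mem_blim _ hinf
    have hw'L : w' ∈ blim L := blim_mono (fun u hu => hu.1) hw'
    have hww : w' = w := by rw [hblim] at hw'L; exact hw'L
    obtain ⟨u, hu, hpre, -⟩ := hw' n
    rw [hww] at hpre
    rcases hu.2 with h | h
    · exact (strictLt_not_prefix h).2 hpre
    · exact (strictLt_not_prefix h).1 hpre
  · intro hfin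
    rw [Set.eq_singleton_iff_unique_mem]
    constructor
    · intro n
      have hprefin : {u : List α | u <+: restrict w n}.Finite := by
        refine Set.Finite.subset (restrict w n).inits.toFinset.finite_toSet ?_
        intro u hu
        rw [List.coe_toFinset]
        exact (List.mem_inits _ _).mpr hu
      obtain ⟨u, hu⟩ := (hL.diff ((hfin n).union hprefin)).nonempty
      have huL : u ∈ L := hu.1
      have hnot : u ∉ {u ∈ L | strictLt u (restrict w n) ∨ strictLt (restrict w n) u}
          ∪ {u : List α | u <+: restrict w n} := hu.2
      rw [Set.mem_union, not_or] at hnot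
      have hnpre : ¬ u <+: restrict w n := hnot.2
      have hnstrict : ¬ (strictLt u (restrict w n) ∨ strictLt (restrict w n) u) :=
        fun h => hnot.1 ⟨huL, h⟩
      rcases prefix_or_strictLt u (restrict w n) with h | h | h | h
      · exact absurd h hnpre
      · refine ⟨u, huL, h, fun heq => hnpre ?_⟩
        rw [← heq]
      · exact absurd (Or.inl h) hnstrict
      · exact absurd (Or.inr h) hnstrict
    · intro w' hw'
      by_contra hne
      obtain ⟨N, hrne⟩ := restrict_ne_of_ne hne
      have hSfin := hfin N
      obtain ⟨M, hM⟩ := (hSfin.image List.length).bddAbove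
      obtain ⟨u, huL, hpre, hneq⟩ := hw' (N + M)
      have hlen : N + M < u.length := by
        have h1 : N + M ≤ u.length := by
          have := hpre.length_le
          rwa [restrict_length] at this
        rcases lt_or_eq_of_le h1 with h | h
        · exact h
        · exact absurd (hpre.eq_of_length (by rw [restrict_length, h])) hneq
      have hNpre : restrict w' N <+: u := (restrict_prefix w' (Nat.le_add_right N M)).trans hpre
      have hmem : u ∈ {u ∈ L | strictLt u (restrict w N) ∨ strictLt (restrict w N) u} := by
        refine ⟨huL, ?_⟩
        rcases prefix_or_strictLt u (restrict w N) with h | h | h | h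
        · exfalso
          have := h.length_le
          rw [restrict_length] at this
          omega
        · exfalso
          apply hrne
          have e1 := List.prefix_iff_eq_take.mp hNpre
          rw [restrict_length] at e1
          have e2 : restrict w N = u.take (restrict w N).length :=
            List.prefix_iff_eq_take.mp h
          rw [restrict_length] at e2
          rw [e1, e2]
        · exact Or.inl h
        · exact Or.inr h
      have : u.length ≤ M := hM (Set.mem_image_of_mem _ hmem)
      omega
end
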